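/- Let R ≥ 4 and let ℓ = (ℓ_1, ℓ_2, …, ℓ_R) be a composition of N into positive parts. For every H̄ ∈ H(R, 1, ℓ) there exist positive integers ℓ'_2, ℓ'_3 with ℓ'_2 + ℓ'_3 = N − ℓ_1 and an array H̄' ∈ H(3, 1, (ℓ_1, ℓ'_2, ℓ'_3)) such that Σ_{r=2}^{R} ℓ_r·|J_r(H̄)| ≤ ℓ'_2·|J_2(H̄')| + ℓ'_3·|J_3(H̄')|. -/
import Mathlib


open scoped Classical

/-- Membership in the class 𝓛 : first column zero, both entries of the
second column nonzero. -/
def matL {F : Type*} [Field F] (B : Matrix (Fin 2) (Fin 2) F) : Prop :=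
  (∀ p, B p 0 = 0) ∧ (∀ p, B p 1 ≠ 0)

/-- Membership in the class 𝓡 : second column zero, both entries of the
first column nonzero. -/
def matR {F : Type*} [Field F] (B : Matrix (Fin 2) (Fin 2) F) : Prop :=
  (∀ p, B p 1 = 0) ∧ (∀ p, B p 0 ≠ 0)

/-- Partial sums `ℓ*_r = ℓ_1 + ⋯ + ℓ_r` of a tuple `ℓ` (0-indexed: the sum
of the entries of index `< r`). -/
def psum {R : ℕ} (ℓ : Fin R → ℕ) (r : ℕ) : ℕ :=
  ∑ k ∈ Finset.univ.filter (fun k : Fin R => (k : ℕ) < r), ℓ k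

/-- The defining conditions for membership of an `R × N` array of 2×2 blocks
in the class `H(R, R_L, ℓ)`:
(i) the blocks in row `r` and columns `ℓ*_{r-1} < i ≤ ℓ*_r` (1-indexed) are
invertible;
(ii) in the first `R_L` rows every block of `𝓛 ∪ 𝓡` lies in `𝓛`, and in the
remaining rows every block of `𝓛 ∪ 𝓡` lies in `𝓡`;
(iii) no two distinct rows among the first `R_L` have two common distinct
columns with all four blocks in `𝓛`, and no two distinct rows among the
remaining ones have two common distinct columns with all four blocks in `𝓡`. -/
def memH {F : Type*} [Field F] (N R RL : ℕ) (ℓ : Fin R → ℕ)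
    (H : Fin R → Fin N → Matrix (Fin 2) (Fin 2) F) : Prop :=
  (∀ (r : Fin R) (i : Fin N),
      psum ℓ (r : ℕ) ≤ (i : ℕ) → (i : ℕ) < psum ℓ ((r : ℕ) + 1) → IsUnit (H r i)) ∧
  (∀ (r : Fin R) (j : Fin N), (r : ℕ) < RL →
      (matL (H r j) ∨ matR (H r j)) → matL (H r j)) ∧
  (∀ (r : Fin R) (j : Fin N), RL ≤ (r : ℕ) →
      (matL (H r j) ∨ matR (H r j)) → matR (H r j)) ∧
  (¬ ∃ (r₁ r₂ : Fin R) (i j : Fin N), r₁ ≠ r₂ ∧ i ≠ j ∧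
      (r₁ : ℕ) < RL ∧ (r₂ : ℕ) < RL ∧
      matL (H r₁ i) ∧ matL (H r₂ i) ∧ matL (H r₁ j) ∧ matL (H r₂ j)) ∧
  (¬ ∃ (r₁ r₂ : Fin R) (i j : Fin N), r₁ ≠ r₂ ∧ i ≠ j ∧
      RL ≤ (r₁ : ℕ) ∧ RL ≤ (r₂ : ℕ) ∧
      matR (H r₁ i) ∧ matR (H r₂ i) ∧ matR (H r₁ j) ∧ matR (H r₂ j))

/-- `|J_r(H̄)|`, the number of columns whose block in row `r` lies in `𝓛 ∪ 𝓡`. -/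
noncomputable def Jcard {F : Type*} [Field F] {N R : ℕ}
    (H : Fin R → Fin N → Matrix (Fin 2) (Fin 2) F) (r : Fin R) : ℕ :=
  (Finset.univ.filter (fun j : Fin N => matL (H r j) ∨ matR (H r j))).card

/-- The bandwidth `B(H̄) = 2N(N-1) - Σ_r ℓ_r·|J_r(H̄)|` of a configuration. -/
noncomputable def BH {F : Type*} [Field F] {R : ℕ} (N : ℕ) (ℓ : Fin R → ℕ)
    (H : Fin R → Fin N → Matrix (Fin 2) (Fin 2) F) : ℤ :=
  2 * (N : ℤ) * ((N : ℤ) - 1) - ∑ r, (ℓ r : ℤ) * (Jcard H r : ℤ)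

/-- The set of bandwidths of all configurations in
`H(R) = ⋃_{R_L, ℓ} H(R, R_L, ℓ)`. -/
def bandSet (F : Type*) [Field F] (N R : ℕ) : Set ℤ :=
  {b | ∃ (RL : ℕ) (ℓ : Fin R → ℕ)
        (H : Fin R → Fin N → Matrix (Fin 2) (Fin 2) F),
      RL ≤ R ∧ (∀ r, 1 ≤ ℓ r) ∧ (∑ r, ℓ r) = N ∧ memH N R RL ℓ H ∧
      b = BH N ℓ H}

section helpers
variable {F : Type*} [Field F]

lemma matL.not_isUnit {B : Matrix (Fin 2) (Fin 2) F} (h : matL B) : ¬ IsUnit B := by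
  intro hu
  rw [Matrix.isUnit_iff_isUnit_det, Matrix.det_fin_two, h.1 0, h.1 1] at hu
  simp at hu

lemma matR.not_isUnit {B : Matrix (Fin 2) (Fin 2) F} (h : matR B) : ¬ IsUnit B := by
  intro hu
  rw [Matrix.isUnit_iff_isUnit_det, Matrix.det_fin_two, h.1 0, h.1 1] at hu
  simp at hu

noncomputable def Rmat (F : Type*) [Field F] : Matrix (Fin 2) (Fin 2) F := ![![1,0],![1,0]]

lemma matR_Rmat : matR (Rmat F) := by
  refine ⟨fun p => ?_, fun p => ?_⟩ <;> fin_cases p <;> simp [Rmat]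

lemma not_matL_Rmat : ¬ matL (Rmat F) := by
  intro h
  exact h.2 0 (by simp [Rmat])

lemma not_LR_one : ¬ (matL (1 : Matrix (Fin 2) (Fin 2) F) ∨ matR (1 : Matrix (Fin 2) (Fin 2) F)) := by
  rintro (h | h)
  · have := h.1 0; rw [Matrix.one_apply_eq] at this; exact one_ne_zero this
  · have := h.1 1; rw [Matrix.one_apply_eq] at this; exact one_ne_zero this

lemma not_LR_zero : ¬ (matL (0 : Matrix (Fin 2) (Fin 2) F) ∨ matR (0 : Matrix (Fin 2) (Fin 2) F)) := by
  rintro (h | h)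
  · exact h.2 0 rfl
  · exact h.2 0 rfl

end helpers

lemma card_filter_Ico (N A B : ℕ) (hB : B ≤ N) :
    ((Finset.univ : Finset (Fin N)).filter fun j : Fin N => A ≤ (j : ℕ) ∧ (j : ℕ) < B).card
      = B - A := by
  rw [← Nat.card_Ico A B]
  refine Finset.card_bij' (fun (j : Fin N) _ => (j : ℕ))
    (fun x hx => (⟨x, lt_of_lt_of_le (Finset.mem_Ico.mp hx).2 hB⟩ : Fin N))
    ?_ ?_ ?_ ?_
  · intro a ha
    simp only [Finset.mem_filter] at ha
    exact Finset.mem_Ico.mpr ha.2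
  · intro x hx
    simp only [Finset.mem_filter, Finset.mem_univ, true_and]
    exact Finset.mem_Ico.mp hx
  · intro a _; rfl
  · intro x _; rfl

lemma card_filter_or (N u B : ℕ) (hu : u ≤ B) (hB : B ≤ N) :
    ((Finset.univ : Finset (Fin N)).filter fun j : Fin N => (j : ℕ) < u ∨ B ≤ (j : ℕ)).card
      = u + (N - B) := by
  have h1 : ((Finset.univ : Finset (Fin N)).filter fun j : Fin N => (j : ℕ) < u ∨ B ≤ (j : ℕ))
      = ((Finset.univ : Finset (Fin N)).filter fun j : Fin N => 0 ≤ (j : ℕ) ∧ (j : ℕ) < u)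
        ∪ ((Finset.univ : Finset (Fin N)).filter fun j : Fin N => B ≤ (j : ℕ) ∧ (j : ℕ) < N) := by
    ext j
    simp only [Finset.mem_filter, Finset.mem_union, Finset.mem_univ, true_and]
    have := j.isLt
    omega
  rw [h1, Finset.card_union_of_disjoint, card_filter_Ico N 0 u (le_trans hu hB),
    card_filter_Ico N B N le_rfl]
  · omega
  · rw [Finset.disjoint_filter]
    intro j _ hj
    omega

lemma psum_succ {R : ℕ} (ℓ : Fin R → ℕ) (r : Fin R) :
    psum ℓ ((r : ℕ) + 1) = psum ℓ (r : ℕ) + ℓ r := by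
  unfold psum
  have h : Finset.univ.filter (fun k : Fin R => (k : ℕ) < (r : ℕ) + 1)
      = insert r (Finset.univ.filter (fun k : Fin R => (k : ℕ) < (r : ℕ))) := by
    ext k
    simp only [Finset.mem_filter, Finset.mem_univ, true_and, Finset.mem_insert]
    constructor
    · intro hk
      rcases Nat.lt_succ_iff_lt_or_eq.mp hk with h | h
      · exact Or.inr h
      · exact Or.inl (Fin.ext h)
    · rintro (rfl | hk)
      · omega
      · omega
  rw [h, Finset.sum_insert (by simp)]
  ring

lemma psum_le_sum {R : ℕ} (ℓ : Fin R → ℕ) (r : ℕ) : psum ℓ r ≤ ∑ k, ℓ k :=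
  Finset.sum_le_sum_of_subset (Finset.filter_subset _ _)

lemma psum3 (x y z : ℕ) :
    psum ![x, y, z] 0 = 0 ∧ psum ![x, y, z] 1 = x ∧ psum ![x, y, z] 2 = x + y ∧
      psum ![x, y, z] 3 = x + y + z := by
  have h0 : Finset.univ.filter (fun k : Fin 3 => (k : ℕ) < 0) = ∅ := by decide
  have h1 : Finset.univ.filter (fun k : Fin 3 => (k : ℕ) < 1) = {0} := by decide
  have h2 : Finset.univ.filter (fun k : Fin 3 => (k : ℕ) < 2) = {0, 1} := by decide
  have h3 : Finset.univ.filter (fun k : Fin 3 => (k : ℕ) < 3) = {0, 1, 2} := by decide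
  refine ⟨?_, ?_, ?_, ?_⟩ <;> unfold psum
  · rw [h0]; rfl
  · rw [h1]; simp
  · rw [h2]; simp [Finset.sum_insert]
  · rw [h3]; simp [Finset.sum_insert]; ring

/-- The model configuration: identity blocks on the diagonal ranges, `Rmat`
blocks on `[0,u) ∪ [l1+l2, N)` in row 1 and on `[w, l1+l2)` in row 2. -/
noncomputable def mkH (F : Type*) [Field F] (N l1 l2 u w : ℕ) :
    Fin 3 → Fin N → Matrix (Fin 2) (Fin 2) F :=
  fun r j =>
    if (r : ℕ) = 0 then (if (j : ℕ) < l1 then 1 else 0)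
    else if (r : ℕ) = 1 then
      (if l1 ≤ (j : ℕ) ∧ (j : ℕ) < l1 + l2 then 1
       else if (j : ℕ) < u ∨ l1 + l2 ≤ (j : ℕ) then Rmat F else 0)
    else (if l1 + l2 ≤ (j : ℕ) then 1 else if w ≤ (j : ℕ) then Rmat F else 0)

section mkHsec
variable {F : Type*} [Field F] {N l1 l2 u w : ℕ}

lemma mkH_row0 (hrv : 0 < 3) (j : Fin N) :
    mkH F N l1 l2 u w ⟨0, hrv⟩ j = (if (j : ℕ) < l1 then 1 else 0) := by
  simp only [mkH]; norm_num

lemma mkH_row1 (hrv : 1 < 3) (j : Fin N) :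
    mkH F N l1 l2 u w ⟨1, hrv⟩ j =
      (if l1 ≤ (j : ℕ) ∧ (j : ℕ) < l1 + l2 then 1
       else if (j : ℕ) < u ∨ l1 + l2 ≤ (j : ℕ) then Rmat F else 0) := by
  simp only [mkH]; norm_num

lemma mkH_row2 (hrv : 2 < 3) (j : Fin N) :
    mkH F N l1 l2 u w ⟨2, hrv⟩ j =
      (if l1 + l2 ≤ (j : ℕ) then 1 else if w ≤ (j : ℕ) then Rmat F else 0) := by
  simp only [mkH]; norm_num

lemma mkH_LR_row0 (hrv : 0 < 3) (j : Fin N) :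
    ¬ (matL (mkH F N l1 l2 u w ⟨0, hrv⟩ j) ∨ matR (mkH F N l1 l2 u w ⟨0, hrv⟩ j)) := by
  rw [mkH_row0]
  split_ifs
  · exact not_LR_one
  · exact not_LR_zero

lemma mkH_LR_row1 (hu : u ≤ l1) (hrv : 1 < 3) (j : Fin N) :
    (matL (mkH F N l1 l2 u w ⟨1, hrv⟩ j) ∨ matR (mkH F N l1 l2 u w ⟨1, hrv⟩ j)) ↔
      ((j : ℕ) < u ∨ l1 + l2 ≤ (j : ℕ)) := by
  rw [mkH_row1]
  constructor
  · intro h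
    split_ifs at h with h1 h2
    · exact absurd h not_LR_one
    · exact h2
    · exact absurd h not_LR_zero
  · intro hj
    rw [if_neg (by omega), if_pos hj]
    exact Or.inr matR_Rmat

lemma mkH_LR_row2 (hw : w ≤ l1 + l2) (hrv : 2 < 3) (j : Fin N) :
    (matL (mkH F N l1 l2 u w ⟨2, hrv⟩ j) ∨ matR (mkH F N l1 l2 u w ⟨2, hrv⟩ j)) ↔
      (w ≤ (j : ℕ) ∧ (j : ℕ) < l1 + l2) := by
  rw [mkH_row2]
  constructor
  · intro h
    split_ifs at h with h1 h2
    · exact absurd h not_LR_one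
    · exact ⟨h2, by omega⟩
    · exact absurd h not_LR_zero
  · intro hj
    rw [if_neg (by omega), if_pos hj.1]
    exact Or.inr matR_Rmat

end mkHsec

section mkHsec2
variable {F : Type*} [Field F] {N l1 l2 u w : ℕ}

lemma Jcard_mkH_1 (hu : u ≤ l1) (hB : l1 + l2 ≤ N) :
    Jcard (mkH F N l1 l2 u w) 1 = u + (N - (l1 + l2)) := by
  unfold Jcard
  rw [← card_filter_or N u (l1 + l2) (by omega) hB]
  congr 1
  apply Finset.filter_congr
  intro j _
  exact mkH_LR_row1 hu (by omega) j

lemma Jcard_mkH_2 (hw : w ≤ l1 + l2) (hB : l1 + l2 ≤ N) :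
    Jcard (mkH F N l1 l2 u w) 2 = (l1 + l2) - w := by
  unfold Jcard
  rw [← card_filter_Ico N w (l1 + l2) hB]
  congr 1
  apply Finset.filter_congr
  intro j _
  exact mkH_LR_row2 (u := u) hw (by omega) j

lemma memH_mkH (h1 : 1 ≤ l1) (hN : l1 + l2 + (N - l1 - l2) = N)
    (hu : u ≤ l1) (hw : w ≤ l1 + l2) (huw : u ≤ w + 1) :
    memH N 3 1 ![l1, l2, N - l1 - l2] (mkH F N l1 l2 u w) := by
  obtain ⟨p0, p1, p2, p3⟩ := psum3 l1 l2 (N - l1 - l2)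
  refine ⟨?_, ?_, ?_, ?_, ?_⟩
  · -- invertibility on diagonal ranges
    rintro ⟨rv, hrv⟩ i hlo hhi
    have hlo' : psum ![l1, l2, N - l1 - l2] rv ≤ (i : ℕ) := hlo
    have hhi' : (i : ℕ) < psum ![l1, l2, N - l1 - l2] (rv + 1) := hhi
    clear hlo hhi
    interval_cases rv
    · rw [show (0 : ℕ) + 1 = 1 from rfl, p1] at hhi'
      rw [mkH_row0, if_pos hhi']
      exact isUnit_one
    · rw [p1] at hlo'
      rw [show (1 : ℕ) + 1 = 2 from rfl, p2] at hhi'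
      rw [mkH_row1, if_pos ⟨hlo', hhi'⟩]
      exact isUnit_one
    · rw [p2] at hlo'
      rw [mkH_row2, if_pos hlo']
      exact isUnit_one
  · -- rows < 1 : no 𝓛 ∪ 𝓡 blocks at all
    rintro ⟨rv, hrv⟩ j hr hLR
    have hr' : rv < 1 := hr
    have hrv0 : rv = 0 := by omega
    subst hrv0
    exact absurd hLR (mkH_LR_row0 hrv j)
  · -- rows ≥ 1 : 𝓛 ∪ 𝓡 blocks are in 𝓡
    rintro ⟨rv, hrv⟩ j hr hLR
    have hr' : 1 ≤ rv := hr
    have hrv12 : rv = 1 ∨ rv = 2 := by omega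
    rcases hrv12 with rfl | rfl
    · rcases hLR with h | h
      · rw [mkH_row1] at h ⊢
        split_ifs at h with ha hb
        · exact absurd (Or.inl h) not_LR_one
        · exact absurd h not_matL_Rmat
        · exact absurd (Or.inl h) not_LR_zero
      · exact h
    · rcases hLR with h | h
      · rw [mkH_row2] at h ⊢
        split_ifs at h with ha hb
        · exact absurd (Or.inl h) not_LR_one
        · exact absurd h not_matL_Rmat
        · exact absurd (Or.inl h) not_LR_zero
      · exact h
  · -- no 𝓛-rectangle among rows < 1
    rintro ⟨r₁, r₂, i, j, hne, hij, hr1, hr2, -⟩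
    have h1' : (r₁ : ℕ) < 1 := hr1
    have h2' : (r₂ : ℕ) < 1 := hr2
    exact hne (Fin.ext (by omega))
  · -- no 𝓡-rectangle among rows ≥ 1
    rintro ⟨r₁, r₂, i, j, hne, hij, hr1, hr2, hi1, hi2, hj1, hj2⟩
    have hvne : (r₁ : ℕ) ≠ (r₂ : ℕ) := fun h => hne (Fin.ext h)
    have key : ∀ (r : Fin 3) (k : Fin N), 1 ≤ (r : ℕ) → matR (mkH F N l1 l2 u w r k) →
        ((r : ℕ) = 1 ∧ ((k : ℕ) < u ∨ l1 + l2 ≤ (k : ℕ))) ∨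
        ((r : ℕ) = 2 ∧ w ≤ (k : ℕ) ∧ (k : ℕ) < l1 + l2) := by
      rintro ⟨rv, hrv⟩ k hr h
      have hr' : 1 ≤ rv := hr
      have hrv12 : rv = 1 ∨ rv = 2 := by omega
      rcases hrv12 with rfl | rfl
      · exact Or.inl ⟨rfl, (mkH_LR_row1 (w := w) hu hrv k).mp (Or.inr h)⟩
      · exact Or.inr ⟨rfl, (mkH_LR_row2 (u := u) hw hrv k).mp (Or.inr h)⟩
    have k11 := key r₁ i hr1 hi1
    have k21 := key r₂ i hr2 hi2
    have k12 := key r₁ j hr1 hj1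
    have k22 := key r₂ j hr2 hj2
    have hijv : (i : ℕ) ≠ (j : ℕ) := fun h => hij (Fin.ext h)
    omega

end mkHsec2

lemma caseB_arith (N K m a l₂ : ℕ) (hc : N + 2 ≤ 2 * a) (ham : a + m ≤ N)
    (hm1 : 1 ≤ m) (hm2 : m + 2 ≤ K) (hKN : K + 1 ≤ N)
    (hle1 : l₂ ≤ N - a) (hle2 : l₂ ≤ K - 1) (hor : l₂ = N - a ∨ l₂ = K - 1) :
    m * a + (K - m) * ((N - a) + 1) ≤ l₂ * (N - l₂) + (K - l₂) * (l₂ + 1) := by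
  have haN : a ≤ N := by omega
  have hmK : m ≤ K := by omega
  have hl2N : l₂ ≤ N := by omega
  have hl2K : l₂ ≤ K := by omega
  zify [haN, hmK, hl2N, hl2K]
  have c2 : (0 : ℤ) ≤ 2 * (a : ℤ) - N - 1 := by omega
  have c5 : (0 : ℤ) ≤ (N : ℤ) - a - m := by omega
  rcases hor with rfl | rfl
  · have hNa : ((N - a : ℕ) : ℤ) = (N : ℤ) - a := by omega
    rw [hNa]
    nlinarith [mul_nonneg c5 c2]
  · have hK1 : ((K - 1 : ℕ) : ℤ) = (K : ℤ) - 1 := by omega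
    rw [hK1]
    have c1 : (0 : ℤ) ≤ (N : ℤ) - K + 1 - a := by omega
    have c3 : (0 : ℤ) ≤ (m : ℤ) - 1 := by omega
    have c4 : (0 : ℤ) ≤ (K : ℤ) - 2 - m := by omega
    have c7 : (0 : ℤ) ≤ (a : ℤ) - K - 1 := by omega
    nlinarith [mul_nonneg c1 c3, mul_nonneg c4 c7]


set_option maxHeartbeats 1000000 in
/-- let `R ≥ 4` and let `ℓ` be a composition of `N` into `R`
positive parts.  For every `H̄ ∈ H(R, 1, ℓ)` there are positive `ℓ'₂, ℓ'₃`
with `ℓ'₂ + ℓ'₃ = N - ℓ₁` and an array `H̄' ∈ H(3, 1, (ℓ₁, ℓ'₂, ℓ'₃))` with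
`Σ_{r=2}^{R} ℓ_r·|J_r(H̄)| ≤ ℓ'₂·|J_2(H̄')| + ℓ'₃·|J_3(H̄')|`. -/
theorem statement18 (F : Type*) [Field F] [Fintype F] (N : ℕ) (hN : 2 ≤ N)
    (R : ℕ) (hR : 4 ≤ R)
    (ℓ : Fin R → ℕ) (hpos : ∀ r, 1 ≤ ℓ r) (hsum : ∑ r, ℓ r = N)
    (H : Fin R → Fin N → Matrix (Fin 2) (Fin 2) F)
    (hH : memH N R 1 ℓ H) :
    ∃ l₂ l₃ : ℕ, 1 ≤ l₂ ∧ 1 ≤ l₃ ∧ l₂ + l₃ = N - ℓ ⟨0, by omega⟩ ∧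
      ∃ H' : Fin 3 → Fin N → Matrix (Fin 2) (Fin 2) F,
        memH N 3 1 ![ℓ ⟨0, by omega⟩, l₂, l₃] H' ∧
        ∑ r ∈ Finset.univ.filter (fun r : Fin R => 1 ≤ (r : ℕ)),
            ℓ r * Jcard H r ≤
          l₂ * Jcard H' 1 + l₃ * Jcard H' 2 := by
  classical
  obtain ⟨hinv, hLrow, hRrow, hLrect, hRrect⟩ := hH
  set l1 : ℕ := ℓ ⟨0, by omega⟩ with hl1
  set T : Finset (Fin R) := Finset.univ.filter (fun r : Fin R => 1 ≤ (r : ℕ)) with hT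
  -- `l1 + (sum over T) = N`
  have hsplit : (∑ r ∈ T, ℓ r) + ∑ r ∈ Finset.univ.filter (fun r : Fin R => ¬ 1 ≤ (r : ℕ)), ℓ r
      = N := by
    rw [Finset.sum_filter_add_sum_filter_not]; exact hsum
  have hcompl : Finset.univ.filter (fun r : Fin R => ¬ 1 ≤ (r : ℕ))
      = {(⟨0, by omega⟩ : Fin R)} := by
    ext r
    simp only [Finset.mem_filter, Finset.mem_univ, true_and, Finset.mem_singleton, not_le,
      Nat.lt_one_iff]
    constructor
    · intro h; exact Fin.ext h
    · intro h; subst h; rfl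
  set K : ℕ := ∑ r ∈ T, ℓ r with hKdef
  have hK : K + l1 = N := by rw [hcompl, Finset.sum_singleton] at hsplit; exact hsplit
  -- the row of maximal `J`-cardinality among rows ≥ 1
  have hTne : T.Nonempty := ⟨⟨1, by omega⟩, Finset.mem_filter.mpr ⟨Finset.mem_univ _, le_refl 1⟩⟩
  obtain ⟨rs, hrsT, hrsmax⟩ := Finset.exists_max_image T (fun r => Jcard H r) hTne
  have hrs1 : 1 ≤ (rs : ℕ) := (Finset.mem_filter.mp hrsT).2
  set a : ℕ := Jcard H rs with ha
  set m : ℕ := ℓ rs with hm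
  have hmpos : 1 ≤ m := hpos rs
  -- `T` has at least 3 elements, hence `m + 2 ≤ K`
  have hTcard : 3 ≤ T.card := by
    have hsub : ({⟨1, by omega⟩, ⟨2, by omega⟩, ⟨3, by omega⟩} : Finset (Fin R)) ⊆ T := by
      intro x hx
      rw [Finset.mem_insert, Finset.mem_insert, Finset.mem_singleton] at hx
      rcases hx with rfl | rfl | rfl
      · exact Finset.mem_filter.mpr ⟨Finset.mem_univ _, (by omega : (1:ℕ) ≤ 1)⟩
      · exact Finset.mem_filter.mpr ⟨Finset.mem_univ _, (by omega : (1:ℕ) ≤ 2)⟩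
      · exact Finset.mem_filter.mpr ⟨Finset.mem_univ _, (by omega : (1:ℕ) ≤ 3)⟩
    refine le_trans (le_of_eq ?_) (Finset.card_le_card hsub)
    rw [Finset.card_insert_of_notMem, Finset.card_insert_of_notMem, Finset.card_singleton]
    · rw [Finset.mem_singleton]
      intro h; have h' : (2:ℕ) = 3 := congrArg Fin.val h; omega
    · rw [Finset.mem_insert, Finset.mem_singleton]
      rintro (h | h)
      · have h' : (1:ℕ) = 2 := congrArg Fin.val h; omega
      · have h' : (1:ℕ) = 3 := congrArg Fin.val h; omega
  have hsum_erase : (∑ r ∈ T.erase rs, ℓ r) + ℓ rs = K := Finset.sum_erase_add T ℓ hrsT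
  have hcard_erase : 2 ≤ (T.erase rs).card := by
    rw [Finset.card_erase_of_mem hrsT]; omega
  have herase_ge : 2 ≤ ∑ r ∈ T.erase rs, ℓ r := by
    calc 2 ≤ (T.erase rs).card := hcard_erase
    _ = ∑ r ∈ T.erase rs, 1 := by rw [Finset.sum_const, smul_eq_mul, mul_one]
    _ ≤ ∑ r ∈ T.erase rs, ℓ r := Finset.sum_le_sum (fun r _ => hpos r)
  have hm2 : m + 2 ≤ K := by omega
  -- `a + m ≤ N`
  have hpsle : psum ℓ ((rs : ℕ) + 1) ≤ N := by
    have := psum_le_sum ℓ ((rs : ℕ) + 1); rwa [hsum] at this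
  have hpssucc := psum_succ ℓ rs
  have ham : a + m ≤ N := by
    have hdisj : Disjoint
        (Finset.univ.filter (fun j : Fin N => matL (H rs j) ∨ matR (H rs j)))
        (Finset.univ.filter (fun i : Fin N =>
          psum ℓ (rs : ℕ) ≤ (i : ℕ) ∧ (i : ℕ) < psum ℓ ((rs : ℕ) + 1))) := by
      rw [Finset.disjoint_filter]
      intro i _ hLR ⟨h1, h2⟩
      have := hinv rs i h1 h2
      rcases hLR with h | h
      · exact h.not_isUnit this
      · exact h.not_isUnit this
    have hcards := Finset.card_union_of_disjoint hdisj
    have hle : (Finset.univ.filter (fun j : Fin N => matL (H rs j) ∨ matR (H rs j)) ∪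
        Finset.univ.filter (fun i : Fin N =>
          psum ℓ (rs : ℕ) ≤ (i : ℕ) ∧ (i : ℕ) < psum ℓ ((rs : ℕ) + 1))).card ≤ N := by
      refine le_trans (Finset.card_le_card (Finset.subset_univ _)) ?_
      rw [Finset.card_univ, Fintype.card_fin]
    rw [hcards] at hle
    rw [card_filter_Ico N _ _ hpsle] at hle
    have : a ≤ (Finset.univ.filter (fun j : Fin N => matL (H rs j) ∨ matR (H rs j))).card := le_rfl
    omega
  have haN : a ≤ N := by omega
  -- rows other than `rs` have `J`-cardinality at most `N - a + 1`
  have hbound : ∀ r ∈ T, r ≠ rs → Jcard H r ≤ (N - a) + 1 := by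
    intro r hrT hrne
    set Jr := Finset.univ.filter (fun j : Fin N => matL (H r j) ∨ matR (H r j)) with hJr
    set Js := Finset.univ.filter (fun j : Fin N => matL (H rs j) ∨ matR (H rs j)) with hJs
    have hr1 : 1 ≤ (r : ℕ) := (Finset.mem_filter.mp hrT).2
    have hinter : (Jr ∩ Js).card ≤ 1 := by
      rw [Finset.card_le_one]
      intro i hi j hj
      by_contra hij
      refine hRrect ⟨r, rs, i, j, hrne, hij, hr1, hrs1, ?_, ?_, ?_, ?_⟩
      · exact hRrow r i hr1 (Finset.mem_filter.mp (Finset.mem_inter.mp hi).1).2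
      · exact hRrow rs i hrs1 (Finset.mem_filter.mp (Finset.mem_inter.mp hi).2).2
      · exact hRrow r j hr1 (Finset.mem_filter.mp (Finset.mem_inter.mp hj).1).2
      · exact hRrow rs j hrs1 (Finset.mem_filter.mp (Finset.mem_inter.mp hj).2).2
    have hsdiff : (Jr \ Js).card ≤ N - a := by
      have h1 : Jr \ Js ⊆ Finset.univ \ Js := by
        exact Finset.sdiff_subset_sdiff (Finset.subset_univ _) le_rfl
      refine le_trans (Finset.card_le_card h1) ?_
      rw [Finset.card_sdiff_of_subset (Finset.subset_univ _), Finset.card_univ, Fintype.card_fin]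
      have hJsa : Js.card = a := rfl
      omega
    calc Jcard H r = (Jr \ Js).card + (Jr ∩ Js).card := (Finset.card_sdiff_add_card_inter _ _).symm
    _ ≤ (N - a) + 1 := add_le_add hsdiff hinter
  -- the two sum bounds
  have sumA : ∑ r ∈ T, ℓ r * Jcard H r ≤ K * a := by
    calc ∑ r ∈ T, ℓ r * Jcard H r ≤ ∑ r ∈ T, ℓ r * a :=
      Finset.sum_le_sum (fun r hr => Nat.mul_le_mul_left _ (hrsmax r hr))
    _ = K * a := by rw [← Finset.sum_mul]
  have sumB : ∑ r ∈ T, ℓ r * Jcard H r ≤ m * a + (K - m) * ((N - a) + 1) := by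
    rw [← Finset.sum_erase_add T _ hrsT]
    have h1 : ∑ r ∈ T.erase rs, ℓ r * Jcard H r ≤ (K - m) * ((N - a) + 1) := by
      calc ∑ r ∈ T.erase rs, ℓ r * Jcard H r ≤ ∑ r ∈ T.erase rs, ℓ r * ((N - a) + 1) :=
        Finset.sum_le_sum (fun r hr => Nat.mul_le_mul_left _
          (hbound r (Finset.mem_of_mem_erase hr) (Finset.ne_of_mem_erase hr)))
      _ = (K - m) * ((N - a) + 1) := by rw [← Finset.sum_mul]; congr 1; omega
    have h2 : ℓ rs * Jcard H rs = m * a := rfl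
    omega
  -- case split
  by_cases hc : 2 * a ≤ N + 1
  · -- Case A
    set l₂ : ℕ := max 1 (a - l1) with hl₂
    set u : ℕ := a - min a (K - l₂) with hu'
    set w : ℕ := l1 + l₂ - a with hw'
    have hl1p : 1 ≤ l1 := hpos _
    have hl₂1 : 1 ≤ l₂ := le_max_left _ _
    have hl₂K : l₂ + 1 ≤ K := by omega
    have hB : l1 + l₂ ≤ N := by omega
    have hu : u ≤ l1 := by omega
    have hw : w ≤ l1 + l₂ := by omega
    have huw : u ≤ w + 1 := by omega
    refine ⟨l₂, K - l₂, hl₂1, by omega, by omega, mkH F N l1 l₂ u w, ?_, ?_⟩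
    · have hKl : K - l₂ = N - l1 - l₂ := by omega
      rw [hKl]
      exact memH_mkH hl1p (by omega) hu hw huw
    · rw [Jcard_mkH_1 hu hB, Jcard_mkH_2 hw hB]
      have e2 : (l1 + l₂) - w = a := by omega
      have e1 : a ≤ u + (N - (l1 + l₂)) := by omega
      calc ∑ r ∈ T, ℓ r * Jcard H r ≤ K * a := sumA
      _ = l₂ * a + (K - l₂) * a := by rw [← Nat.add_mul]; congr 1; omega
      _ ≤ l₂ * (u + (N - (l1 + l₂))) + (K - l₂) * ((l1 + l₂) - w) := by
          rw [e2]
          exact Nat.add_le_add_right (Nat.mul_le_mul_left _ e1) _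
  · -- Case B
    obtain ⟨l₂, hle1, hle2, hor⟩ : ∃ l₂, l₂ ≤ N - a ∧ l₂ ≤ K - 1 ∧ (l₂ = N - a ∨ l₂ = K - 1) :=
      ⟨min (N - a) (K - 1), min_le_left _ _, min_le_right _ _, min_choice _ _⟩
    have hl1p : 1 ≤ l1 := hpos _
    have hl₂1 : 1 ≤ l₂ := by omega
    have hl₂K : l₂ + 1 ≤ K := by omega
    have hB : l1 + l₂ ≤ N := by omega
    have hu : l1 ≤ l1 := le_rfl
    have hw : l1 - 1 ≤ l1 + l₂ := by omega
    have huw : l1 ≤ (l1 - 1) + 1 := by omega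
    refine ⟨l₂, K - l₂, hl₂1, by omega, by omega, mkH F N l1 l₂ l1 (l1 - 1), ?_, ?_⟩
    · have hKl : K - l₂ = N - l1 - l₂ := by omega
      rw [hKl]
      exact memH_mkH hl1p (by omega) hu hw huw
    · rw [Jcard_mkH_1 hu hB, Jcard_mkH_2 hw hB]
      refine le_trans sumB ?_
      have e1 : l1 + (N - (l1 + l₂)) = N - l₂ := by omega
      have e2 : (l1 + l₂) - (l1 - 1) = l₂ + 1 := by omega
      rw [e1, e2]
      exact caseB_arith N K m a l₂ (by omega) ham hmpos hm2 (by omega) hle1 hle2 hor
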